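/- Let Δ be a reduced root system with positive roots Δ⁺ and let γ be the highest root of an irreducible component of Δ. If α, β ∈ Φ_γ⁺ ∪ {γ} and α + β ∈ Δ, then α + β = γ. -/

import Mathlib

/-!
A highest root `γ` satisfies `γ + x ∉ Δ` for every positive root `x`: a sum of two roots is
always linked to both by non-orthogonality, so `x` lies in the component of `γ`. Together with
the fact that two roots with negative inner product sum to a root (unless opposite), this forces
`⟪γ, α⟫ > 0` for `α ∈ Φ_γ⁺`, and integrality of Cartan numbers then gives `2⟪γ, α⟫ ≥ ⟪γ, γ⟫`.
For `α, β ∈ Φ_γ⁺` with `δ = α + β ∈ Δ` this yields `⟪γ, δ⟫ ≥ ⟪γ, γ⟫ > 0`, so `γ - δ` is a root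
unless `δ = γ`. Neither sign is possible: `δ - γ ∈ Δ⁺` would make `γ + (δ - γ)` a root, and
`γ - δ ∈ Δ⁺` would give `⟪γ, γ - δ⟫ > 0`.
-/

open RealInnerProductSpace

section RootAxioms

variable {V : Type*} [NormedAddCommGroup V] [InnerProductSpace ℝ V] {Δ : Set V}

lemma exists_int_two_mul_inner_eq
    (hint : ∀ α ∈ Δ, ∀ β ∈ Δ, ∃ n : ℤ, 2 * ⟪β, α⟫ / ⟪α, α⟫ = (n : ℝ))
    {a b : V} (ha : a ∈ Δ) (hb : b ∈ Δ) : ∃ n : ℤ, 2 * ⟪a, b⟫ = n * ⟪a, a⟫ := by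
  rcases eq_or_ne a 0 with rfl | ha0
  · exact ⟨0, by simp⟩
  obtain ⟨n, hn⟩ := hint a ha b hb
  refine ⟨n, ?_⟩
  rw [← hn, real_inner_comm, div_mul_cancel₀ _ (real_inner_self_pos.2 ha0).ne']

lemma add_mem_of_two_mul_inner_eq_neg
    (hrefl : ∀ α ∈ Δ, ∀ β ∈ Δ, β - (2 * ⟪β, α⟫ / ⟪α, α⟫) • α ∈ Δ)
    {a b : V} (ha : a ∈ Δ) (hb : b ∈ Δ) (ha0 : a ≠ 0) (hab : 2 * ⟪a, b⟫ = -⟪a, a⟫) :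
    a + b ∈ Δ := by
  have hcoeff : 2 * ⟪b, a⟫ / ⟪a, a⟫ = -1 := by
    rw [real_inner_comm, hab, neg_div, div_self (real_inner_self_pos.2 ha0).ne']
  have h := hrefl a ha b hb
  rwa [hcoeff, neg_smul, one_smul, sub_neg_eq_add, add_comm] at h

lemma add_mem_of_inner_neg
    (hrefl : ∀ α ∈ Δ, ∀ β ∈ Δ, β - (2 * ⟪β, α⟫ / ⟪α, α⟫) • α ∈ Δ)
    (hint : ∀ α ∈ Δ, ∀ β ∈ Δ, ∃ n : ℤ, 2 * ⟪β, α⟫ / ⟪α, α⟫ = (n : ℝ))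
    {a b : V} (ha : a ∈ Δ) (hb : b ∈ Δ) (hab : ⟪a, b⟫ < 0) (hne : a + b ≠ 0) :
    a + b ∈ Δ := by
  have ha0 : a ≠ 0 := by rintro rfl; simp at hab
  have hb0 : b ≠ 0 := by rintro rfl; simp at hab
  have haa := real_inner_self_pos.2 ha0
  have hbb := real_inner_self_pos.2 hb0
  obtain ⟨m, hm⟩ := exists_int_two_mul_inner_eq hint ha hb
  obtain ⟨n, hn⟩ := exists_int_two_mul_inner_eq hint hb ha
  rw [real_inner_comm] at hn
  have hm_neg : (m : ℝ) < 0 := by nlinarith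
  have hn_neg : (n : ℝ) < 0 := by nlinarith
  by_cases hm1 : m = -1
  · exact add_mem_of_two_mul_inner_eq_neg hrefl ha hb ha0 (by simp [hm, hm1])
  by_cases hn1 : n = -1
  · rw [add_comm]
    refine add_mem_of_two_mul_inner_eq_neg hrefl hb ha hb0 ?_
    simp [real_inner_comm, hn, hn1]
  -- Both Cartan numbers are now `≤ -2`, which forces `‖a + b‖² ≤ 0`.
  have hm2 : m ≤ -2 := by
    have : m < 0 := by exact_mod_cast hm_neg
    omega
  have hn2 : n ≤ -2 := by
    have : n < 0 := by exact_mod_cast hn_neg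
    omega
  have hm2' : (m : ℝ) ≤ -2 := by exact_mod_cast hm2
  have hn2' : (n : ℝ) ≤ -2 := by exact_mod_cast hn2
  have hsq : ⟪a + b, a + b⟫ ≤ 0 := by
    rw [inner_add_add_self]
    nlinarith [real_inner_comm a b]
  exact absurd (real_inner_self_nonpos.1 hsq) hne

lemma sub_mem_of_inner_pos (hneg : ∀ α ∈ Δ, -α ∈ Δ)
    (hrefl : ∀ α ∈ Δ, ∀ β ∈ Δ, β - (2 * ⟪β, α⟫ / ⟪α, α⟫) • α ∈ Δ)
    (hint : ∀ α ∈ Δ, ∀ β ∈ Δ, ∃ n : ℤ, 2 * ⟪β, α⟫ / ⟪α, α⟫ = (n : ℝ))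
    {a b : V} (ha : a ∈ Δ) (hb : b ∈ Δ) (hab : 0 < ⟪a, b⟫) (hne : a ≠ b) :
    a - b ∈ Δ := by
  rw [sub_eq_add_neg]
  exact add_mem_of_inner_neg hrefl hint ha (hneg b hb) (by simpa using hab)
    (by rwa [← sub_eq_add_neg, sub_ne_zero])

lemma inner_self_le_two_mul_inner
    (hint : ∀ α ∈ Δ, ∀ β ∈ Δ, ∃ n : ℤ, 2 * ⟪β, α⟫ / ⟪α, α⟫ = (n : ℝ))
    {a b : V} (ha : a ∈ Δ) (hb : b ∈ Δ) (hab : 0 < ⟪a, b⟫) : ⟪a, a⟫ ≤ 2 * ⟪a, b⟫ := by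
  obtain ⟨n, hn⟩ := exists_int_two_mul_inner_eq hint ha hb
  have haa : 0 ≤ ⟪a, a⟫ := real_inner_self_nonneg
  have hn_pos : (0 : ℝ) < n := by nlinarith
  have hn1 : (1 : ℝ) ≤ n := by exact_mod_cast (by exact_mod_cast hn_pos : 0 < n)
  nlinarith

-- When `a ⊥ b`, both are non-orthogonal to `a + b`.
lemma eqvGen_of_add_mem (hnz : ∀ α ∈ Δ, α ≠ (0 : V)) {conn : V → V → Prop}
    (hconn : ∀ a ∈ Δ, ∀ b ∈ Δ, ⟪a, b⟫ ≠ 0 → conn a b)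
    {a b : V} (ha : a ∈ Δ) (hb : b ∈ Δ) (hab : a + b ∈ Δ) : Relation.EqvGen conn a b := by
  by_cases h : ⟪a, b⟫ = 0
  · have h₁ : ⟪a, a + b⟫ ≠ 0 := by
      rw [inner_add_right, h, add_zero]; exact (real_inner_self_pos.2 (hnz a ha)).ne'
    have h₂ : ⟪a + b, b⟫ ≠ 0 := by
      rw [inner_add_left, h, zero_add]; exact (real_inner_self_pos.2 (hnz b hb)).ne'
    exact .trans _ _ _ (.rel _ _ (hconn _ ha _ hab h₁)) (.rel _ _ (hconn _ hab _ hb h₂))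
  · exact .rel _ _ (hconn a ha b hb h)

end RootAxioms

section HighestRoot

variable {V : Type*} [NormedAddCommGroup V] [InnerProductSpace ℝ V] {Δ Δpos : Set V} {γ : V}

lemma inner_pos_of_mem_of_sub_mem (hnz : ∀ α ∈ Δ, α ≠ (0 : V)) (hneg : ∀ α ∈ Δ, -α ∈ Δ)
    (hrefl : ∀ α ∈ Δ, ∀ β ∈ Δ, β - (2 * ⟪β, α⟫ / ⟪α, α⟫) • α ∈ Δ)
    (hint : ∀ α ∈ Δ, ∀ β ∈ Δ, ∃ n : ℤ, 2 * ⟪β, α⟫ / ⟪α, α⟫ = (n : ℝ))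
    (hpos_sub : Δpos ⊆ Δ)
    (hpos_part : ∀ α ∈ Δ, (α ∈ Δpos ∧ -α ∉ Δpos) ∨ (α ∉ Δpos ∧ -α ∈ Δpos))
    (hγ : γ ∈ Δpos) (hγmax : ∀ x ∈ Δpos, γ + x ∉ Δ)
    {α : V} (hα : α ∈ Δpos) (hγα : γ - α ∈ Δpos) : 0 < ⟪γ, α⟫ := by
  have hγΔ := hpos_sub hγ
  rcases lt_trichotomy ⟪γ, α⟫ 0 with hlt | heq | hgt
  · refine absurd (add_mem_of_inner_neg hrefl hint hγΔ (hpos_sub hα) hlt ?_) (hγmax α hα)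
    intro h0
    rw [eq_neg_of_add_eq_zero_right h0] at hα
    rcases hpos_part γ hγΔ with ⟨-, h⟩ | ⟨h, -⟩ <;> contradiction
  · -- The reflection of `γ - α` in `γ` is `-(γ + α)`.
    have hcoeff : 2 * ⟪γ - α, γ⟫ / ⟪γ, γ⟫ = 2 := by
      rw [inner_sub_left, real_inner_comm γ α, heq, sub_zero,
        mul_div_assoc, div_self (real_inner_self_pos.2 (hnz γ hγΔ)).ne', mul_one]
    have h := hneg _ (hrefl γ hγΔ _ (hpos_sub hγα))
    rw [hcoeff, show γ - α - (2 : ℝ) • γ = -(γ + α) by module, neg_neg] at h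
    exact absurd h (hγmax α hα)
  · exact hgt

lemma add_eq_of_mem_of_sub_mem (hnz : ∀ α ∈ Δ, α ≠ (0 : V)) (hneg : ∀ α ∈ Δ, -α ∈ Δ)
    (hrefl : ∀ α ∈ Δ, ∀ β ∈ Δ, β - (2 * ⟪β, α⟫ / ⟪α, α⟫) • α ∈ Δ)
    (hint : ∀ α ∈ Δ, ∀ β ∈ Δ, ∃ n : ℤ, 2 * ⟪β, α⟫ / ⟪α, α⟫ = (n : ℝ))
    (hpos_sub : Δpos ⊆ Δ)
    (hpos_part : ∀ α ∈ Δ, (α ∈ Δpos ∧ -α ∉ Δpos) ∨ (α ∉ Δpos ∧ -α ∈ Δpos))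
    (hpos_closed : ∀ α ∈ Δpos, ∀ β ∈ Δpos, α + β ∈ Δ → α + β ∈ Δpos)
    (hγ : γ ∈ Δpos) (hγmax : ∀ x ∈ Δpos, γ + x ∉ Δ)
    {α β : V} (hα : α ∈ Δpos) (hγα : γ - α ∈ Δpos) (hβ : β ∈ Δpos) (hγβ : γ - β ∈ Δpos)
    (hsum : α + β ∈ Δ) : α + β = γ := by
  have hγΔ := hpos_sub hγ
  have inner_pos : ∀ {x}, x ∈ Δpos → γ - x ∈ Δpos → 0 < ⟪γ, x⟫ :=
    inner_pos_of_mem_of_sub_mem hnz hneg hrefl hint hpos_sub hpos_part hγ hγmax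
  have hγ_le : ⟪γ, γ⟫ ≤ ⟪γ, α + β⟫ := by
    have hα' := inner_self_le_two_mul_inner hint hγΔ (hpos_sub hα) (inner_pos hα hγα)
    have hβ' := inner_self_le_two_mul_inner hint hγΔ (hpos_sub hβ) (inner_pos hβ hγβ)
    rw [inner_add_right]
    linarith
  by_contra hne
  have hdiff : γ - (α + β) ∈ Δ :=
    sub_mem_of_inner_pos hneg hrefl hint hγΔ hsum
      ((real_inner_self_pos.2 (hnz γ hγΔ)).trans_le hγ_le) (Ne.symm hne)
  rcases hpos_part _ hdiff with ⟨hpos, -⟩ | ⟨-, hneg_pos⟩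
  · have h := inner_pos hpos (by rw [sub_sub_cancel]; exact hpos_closed α hα β hβ hsum)
    rw [inner_sub_right] at h
    linarith
  · rw [neg_sub] at hneg_pos
    exact hγmax _ hneg_pos (by rwa [add_sub_cancel])

end HighestRoot

theorem stmt1_general {V : Type*} [NormedAddCommGroup V] [InnerProductSpace ℝ V]
    (Δ Δpos : Set V)
    (hnz : ∀ α ∈ Δ, α ≠ (0 : V))
    (hneg : ∀ α ∈ Δ, -α ∈ Δ)
    (hrefl : ∀ α ∈ Δ, ∀ β ∈ Δ, β - (2 * ⟪β, α⟫ / ⟪α, α⟫) • α ∈ Δ)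
    (hint : ∀ α ∈ Δ, ∀ β ∈ Δ, ∃ n : ℤ, 2 * ⟪β, α⟫ / ⟪α, α⟫ = (n : ℝ))
    (hpos_sub : Δpos ⊆ Δ)
    (hpos_part : ∀ α ∈ Δ, (α ∈ Δpos ∧ -α ∉ Δpos) ∨ (α ∉ Δpos ∧ -α ∈ Δpos))
    (hpos_closed : ∀ α ∈ Δpos, ∀ β ∈ Δpos, α + β ∈ Δ → α + β ∈ Δpos)
    -- `conn` generates the decomposition of `Δ` into irreducible components
    (conn : V → V → Prop)
    (hconn : ∀ a b, conn a b ↔ a ∈ Δ ∧ b ∈ Δ ∧ ⟪a, b⟫ ≠ 0)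
    (γ : V) (hγ : γ ∈ Δpos)
    -- `γ` is the highest root of its irreducible component
    (hhigh : ∀ α ∈ Δpos, Relation.EqvGen conn γ α → γ + α ∉ Δ)
    (α β : V)
    (hα : α = γ ∨ (α ∈ Δpos ∧ γ - α ∈ Δpos))
    (hβ : β = γ ∨ (β ∈ Δpos ∧ γ - β ∈ Δpos))
    (hsum : α + β ∈ Δ) :
    α + β = γ := by
  have hγmax : ∀ x ∈ Δpos, γ + x ∉ Δ := fun x hx hγx =>
    hhigh x hx (eqvGen_of_add_mem hnz (fun a ha b hb h => (hconn a b).2 ⟨ha, hb, h⟩)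
      (hpos_sub hγ) (hpos_sub hx) hγx) hγx
  have hα_pos : α ∈ Δpos := hα.elim (· ▸ hγ) And.left
  have hβ_pos : β ∈ Δpos := hβ.elim (· ▸ hγ) And.left
  rcases hα with rfl | ⟨-, hγα⟩
  · exact absurd hsum (hγmax β hβ_pos)
  rcases hβ with rfl | ⟨-, hγβ⟩
  · exact absurd (add_comm α β ▸ hsum) (hγmax α hα_pos)
  exact add_eq_of_mem_of_sub_mem hnz hneg hrefl hint hpos_sub hpos_part hpos_closed hγ hγmax
    hα_pos hγα hβ_pos hγβ hsum

/-- Let `Δ` be a reduced root system with positive roots `Δpos`, and let `γ`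
be the highest root of an irreducible component of `Δ` (formalized: `γ` is positive and
`γ + α ∉ Δ` for every positive root `α` in the same irreducible component of `Δ`, components
being the classes of the equivalence generated by non-orthogonality).  If
`α, β ∈ Φ_γ⁺ ∪ {γ}` and `α + β ∈ Δ`, then `α + β = γ`. -/
theorem stmt1 {V : Type*} [NormedAddCommGroup V] [InnerProductSpace ℝ V]
    (Δ Δpos : Set V)
    (hfin : Δ.Finite)
    (hnz : ∀ α ∈ Δ, α ≠ (0 : V))
    (hneg : ∀ α ∈ Δ, -α ∈ Δ)
    (hreduced : ∀ α ∈ Δ, ∀ t : ℝ, t • α ∈ Δ → t = 1 ∨ t = -1)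
    (hrefl : ∀ α ∈ Δ, ∀ β ∈ Δ, β - (2 * ⟪β, α⟫ / ⟪α, α⟫) • α ∈ Δ)
    (hint : ∀ α ∈ Δ, ∀ β ∈ Δ, ∃ n : ℤ, 2 * ⟪β, α⟫ / ⟪α, α⟫ = (n : ℝ))
    (hpos_sub : Δpos ⊆ Δ)
    (hpos_part : ∀ α ∈ Δ, (α ∈ Δpos ∧ -α ∉ Δpos) ∨ (α ∉ Δpos ∧ -α ∈ Δpos))
    (hpos_closed : ∀ α ∈ Δpos, ∀ β ∈ Δpos, α + β ∈ Δ → α + β ∈ Δpos)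
    -- `conn` generates the decomposition of `Δ` into irreducible components
    (conn : V → V → Prop)
    (hconn : ∀ a b, conn a b ↔ a ∈ Δ ∧ b ∈ Δ ∧ ⟪a, b⟫ ≠ 0)
    (γ : V) (hγ : γ ∈ Δpos)
    -- `γ` is the highest root of its irreducible component
    (hhigh : ∀ α ∈ Δpos, Relation.EqvGen conn γ α → γ + α ∉ Δ)
    (α β : V)
    (hα : α = γ ∨ (α ∈ Δpos ∧ γ - α ∈ Δpos))
    (hβ : β = γ ∨ (β ∈ Δpos ∧ γ - β ∈ Δpos))
    (hsum : α + β ∈ Δ) :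
    α + β = γ :=
  stmt1_general Δ Δpos hnz hneg hrefl hint hpos_sub hpos_part hpos_closed conn hconn γ hγ hhigh α β
    hα hβ hsum
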